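/- The map T is sign-preserving with the appropriate conventions: if T(π, σ) = (π′, σ′) ∈ B(n) then sign(π)·sign(σ) = sign(π′)·sign(σ′), and if T(π, σ) = (π′, σ′) ∈ C(n) then sign(π)·sign(σ) = −sign(π′)·sign(σ′), where the sign of a bijection between two r-element subsets of ℤ, each listed in increasing order, is the sign of the induced permutation of {1,…,r}. -/

import Mathlib

/-! Put `ρ = π'⁻¹ * π`. Since `π'` marries `m (k+1)` to `w k` and `n` to the last woman of the
chain, `ρ` rotates the chain `n = m 0 ↦ m 1 ↦ ⋯ ↦ m (r-1) ↦ n` and fixes every other man.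
The new affairs then read `σ' = τ * σ * ρ`, where `τ` exchanges `n'` with the last woman of the
chain: `τ = 1` if the chain ends at `n'` (so `T p ∈ B(n)`) and `τ = (1' n')` if it ends at `1'`
(so `T p ∈ C(n)`). Hence `sign π * sign σ = sign τ * sign π' * sign σ'`. -/

open Equiv

/-- A pair (marriages, affairs) of permutations. -/
abbrev PairPerm (n : ℕ) := Equiv.Perm (Fin (n + 2)) × Equiv.Perm (Fin (n + 2))

/-- The last index (Mr./Ms. `n`). -/
def lastF (n : ℕ) : Fin (n + 2) := Fin.last (n + 1)

/-- The middle indices `{2,…,n-1}` (people having affairs in `A(n)`). -/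
def middleF (n : ℕ) : Finset (Fin (n + 2)) := (Finset.univ.erase 0).erase (lastF n)

/-- Membership in `A(n)`: the affair permutation fixes the two endpoints. -/
def InA {n : ℕ} (p : PairPerm n) : Prop := p.2 0 = 0 ∧ p.2 (lastF n) = lastF n

/-- Membership in `B(n)`: dummy marriage `n ↦ n'`, dummy affair `1 ↦ 1'`. -/
def InB {n : ℕ} (p : PairPerm n) : Prop := p.1 (lastF n) = lastF n ∧ p.2 0 = 0

/-- Membership in `C(n)`: dummy marriage `n ↦ 1'`, dummy affair `1 ↦ n'`. -/
def InC {n : ℕ} (p : PairPerm n) : Prop := p.1 (lastF n) = 0 ∧ p.2 0 = lastF n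

/-- The alternating chain of men: `m 0 = n`, and `m (k+1)` is the lover of the wife of
`m k` (wife: apply `π`; lover: apply `σ⁻¹`). -/
def chainM {n : ℕ} (p : PairPerm n) : ℕ → Fin (n + 2)
  | 0 => lastF n
  | k + 1 => p.2.symm (p.1 (chainM p k))

/-- The alternating chain of women: `w k` is the wife of `m k`. -/
def chainW {n : ℕ} (p : PairPerm n) (k : ℕ) : Fin (n + 2) := p.1 (chainM p k)

/-- `TStep p q` says that `q` is obtained from `p` by Zeilberger's map `T`: along the
alternating chain `m 0 = n, w 0, m 1, w 1, …` of `p`, which terminates at the first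
woman `w (r-1) ∈ {1', n'}`, marriages `(m k, w k)` become affairs and affairs
`(m (k+1), w k)` become marriages; everything off the chain is unchanged, and the
dummy values are set according to whether the chain ended at `1'` or at `n'`. -/
def TStep {n : ℕ} (p q : PairPerm n) : Prop :=
  ∃ r : ℕ, 1 ≤ r ∧
    (∀ k, k + 1 < r → chainW p k ≠ 0 ∧ chainW p k ≠ lastF n) ∧
    (chainW p (r - 1) = 0 ∨ chainW p (r - 1) = lastF n) ∧
    (∀ i, (∀ k, k < r → i ≠ chainM p k) → q.1 i = p.1 i) ∧
    (∀ i, i ≠ 0 → (∀ k, k < r → i ≠ chainM p k) → q.2 i = p.2 i) ∧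
    (∀ k, k + 1 < r → q.1 (chainM p (k + 1)) = chainW p k) ∧
    q.1 (lastF n) = chainW p (r - 1) ∧
    (∀ k, k < r → q.2 (chainM p k) = chainW p k) ∧
    q.2 0 = (if chainW p (r - 1) = 0 then lastF n else 0)

theorem lastF_ne_zero {n : ℕ} : lastF n ≠ 0 := by
  simp [lastF, Fin.ext_iff]

theorem Equiv.Perm.sign_mul_sign_eq_of_eq_mul_inv_mul {α : Type*} [Fintype α] [DecidableEq α]
    {π σ π' σ' τ : Perm α} (h : σ' = τ * σ * (π'⁻¹ * π)) :
    Perm.sign π * Perm.sign σ = Perm.sign τ * (Perm.sign π' * Perm.sign σ') := by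
  subst h
  simp only [map_mul, map_inv, Int.units_inv_eq_self]
  ac_nf
  simp [Int.units_mul_self]

theorem TStep.snd_eq_swap_mul {n : ℕ} {p q : PairPerm n} (hp : InA p) (h : TStep p q) :
    q.2 = swap (q.1 (lastF n)) (lastF n) * p.2 * (q.1⁻¹ * p.1) := by
  obtain ⟨r, hr, hmid, hend, hq1off, hq2off, hq1on, hq1last, hq2on, hq20⟩ := h
  obtain ⟨s, rfl⟩ : ∃ s, r = s + 1 := ⟨r - 1, by omega⟩
  simp only [Nat.add_sub_cancel] at hend hq1last hq20
  have hswap_fix : ∀ x, x ≠ 0 → x ≠ lastF n → swap (chainW p s) (lastF n) x = x := by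
    intro x hx0 hxl
    refine swap_apply_of_ne_of_ne ?_ hxl
    rcases hend with he | he <;> rw [he] <;> assumption
  rw [hq1last]
  refine Equiv.ext fun i => ?_
  simp only [Perm.mul_apply]
  by_cases hi : ∃ k < s + 1, chainM p k = i
  · obtain ⟨k, hk, rfl⟩ := hi
    rw [hq2on k hk]
    rcases Nat.lt_or_ge k s with hks | hks
    · have hρ : q.1⁻¹ (p.1 (chainM p k)) = chainM p (k + 1) :=
        Perm.inv_eq_iff_eq.mpr (hq1on k (by omega)).symm
      have hσ : p.2 (chainM p (k + 1)) = chainW p k := p.2.apply_symm_apply _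
      rw [hρ, hσ, hswap_fix _ (hmid k (by omega)).1 (hmid k (by omega)).2]
    · obtain rfl : k = s := by omega
      have hρ : q.1⁻¹ (p.1 (chainM p k)) = lastF n := Perm.inv_eq_iff_eq.mpr hq1last.symm
      rw [hρ, hp.2, swap_apply_right]
  · push Not at hi
    rw [show q.1⁻¹ (p.1 i) = i from Perm.inv_eq_iff_eq.mpr (hq1off i fun k hk => (hi k hk).symm).symm]
    by_cases hi0 : i = 0
    · subst hi0
      rw [hp.1, hq20]
      rcases hend with he | he <;> rw [he]
      · rw [if_pos rfl, swap_apply_left]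
      · rw [if_neg lastF_ne_zero, swap_self, refl_apply]
    · have hσ0 : p.2 i ≠ 0 := fun h0 => hi0 (p.2.injective (h0.trans hp.1.symm))
      have hσl : p.2 i ≠ lastF n := fun hl => hi 0 (Nat.succ_pos s)
        (p.2.injective (hp.2.trans hl.symm))
      rw [hswap_fix _ hσ0 hσl, hq2off i hi0 fun k hk => (hi k hk).symm]

theorem T_preserves_sign {n : ℕ} (p q : PairPerm n) (hp : InA p) (h : TStep p q) :
    (InB q → Equiv.Perm.sign p.1 * Equiv.Perm.sign p.2 =
      Equiv.Perm.sign q.1 * Equiv.Perm.sign q.2) ∧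
    (InC q → Equiv.Perm.sign p.1 * Equiv.Perm.sign p.2 =
      -(Equiv.Perm.sign q.1 * Equiv.Perm.sign q.2)) := by
  have hsign := Perm.sign_mul_sign_eq_of_eq_mul_inv_mul (h.snd_eq_swap_mul hp)
  refine ⟨fun hB => ?_, fun hC => ?_⟩
  · rwa [hB.1, swap_self, Perm.sign_refl, one_mul] at hsign
  · rwa [hC.1, Perm.sign_swap lastF_ne_zero.symm, neg_one_mul] at hsign
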